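/- arXiv:1311.0268 — 3 statements merged into one kernel-verified Lean document; each statement's English description precedes it below -/
import Mathlib

section
/- For y ∈ [0,1], the function h(q,y) := 1/√(1-q²) - y³/√(1-q²y²) - (3/2)·(f(qy) - f(q))/q³ satisfies h(q,y) ≥ 0 for all q ∈ (0,1) (with strict inequality when y < 1). -/
noncomputable def f (x : ℝ) : ℝ := x * Real.sqrt (1 - x ^ 2) + Real.arccos x

noncomputable def h (q y : ℝ) : ℝ :=
  1 / Real.sqrt (1 - q ^ 2) - y ^ 3 / Real.sqrt (1 - q ^ 2 * y ^ 2)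
    - (3 / 2) * ((f (q * y) - f q) / q ^ 3)

/-!
Since `f'(x) = -2x²/√(1 - x²)`, the `y`-derivative of `h q` collapses to
`-q²y⁴/(1 - q²y²)^{3/2}`, which is negative for `y > 0`. Hence `h q` strictly decreases
on `[0, 1]`, and it vanishes at `y = 1`.
-/

open Real Set

lemma hasDerivAt_f {x : ℝ} (hx : x ^ 2 < 1) :
    HasDerivAt f (-2 * x ^ 2 / √(1 - x ^ 2)) x := by
  have hpos : 0 < 1 - x ^ 2 := by linarith
  have hsq : √(1 - x ^ 2) ^ 2 = 1 - x ^ 2 := sq_sqrt hpos.le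
  have hx₁ : x ≠ 1 := by rintro rfl; norm_num at hx
  have hx₂ : x ≠ -1 := by rintro rfl; norm_num at hx
  have hinner : HasDerivAt (fun t : ℝ => 1 - t ^ 2) (-(2 * x)) x := by
    simpa using (hasDerivAt_pow 2 x).const_sub 1
  have hprod := (hasDerivAt_id x).mul ((hasDerivAt_sqrt hpos.ne').comp x hinner)
  refine (hprod.add (hasDerivAt_arccos hx₂ hx₁)).congr_deriv ?_
  have : 0 < √(1 - x ^ 2) := sqrt_pos.2 hpos
  simp only [Function.comp_apply, id]
  field_simp
  linarith

lemma h_one (q : ℝ) : h q 1 = 0 := by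
  simp [h]

lemma hasDerivAt_h {q y : ℝ} (hq : q ≠ 0) (hqy : q ^ 2 * y ^ 2 < 1) :
    HasDerivAt (h q) (-(q ^ 2 * y ^ 4) / √(1 - q ^ 2 * y ^ 2) ^ 3) y := by
  have hpos : 0 < 1 - q ^ 2 * y ^ 2 := by linarith
  have hs : 0 < √(1 - q ^ 2 * y ^ 2) := sqrt_pos.2 hpos
  have hinner : HasDerivAt (fun t : ℝ => 1 - q ^ 2 * t ^ 2) (-(q ^ 2 * (2 * y))) y := by
    simpa using ((hasDerivAt_pow 2 y).const_mul (q ^ 2)).const_sub 1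
  have hcube : HasDerivAt (fun t : ℝ => t ^ 3) (3 * y ^ 2) y := by
    simpa using hasDerivAt_pow 3 y
  have hquot := hcube.div ((hasDerivAt_sqrt hpos.ne').comp y hinner) hs.ne'
  have hfq : HasDerivAt (fun t : ℝ => f (q * t))
      (-2 * (q * y) ^ 2 / √(1 - (q * y) ^ 2) * q) y :=
    (hasDerivAt_f (by rwa [mul_pow])).comp y (by simpa using (hasDerivAt_id y).const_mul q)
  have hsum := ((hasDerivAt_const y (1 / √(1 - q ^ 2))).sub hquot).sub
    (((hfq.sub_const (f q)).div_const (q ^ 3)).const_mul (3 / 2))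
  refine hsum.congr_deriv ?_
  simp only [Function.comp_apply, mul_pow]
  generalize √(1 - q ^ 2 * y ^ 2) = s at hs
  field_simp
  ring

lemma strictAntiOn_h {q : ℝ} (hq₀ : q ≠ 0) (hq : |q| < 1) : StrictAntiOn (h q) (Icc 0 1) := by
  have hqy : ∀ y ∈ Icc (0 : ℝ) 1, q ^ 2 * y ^ 2 < 1 := fun y hy => by
    have hq2 : q ^ 2 < 1 := by simpa using sq_lt_sq' (neg_lt_of_abs_lt hq) (lt_of_abs_lt hq)
    have hy2 : y ^ 2 ≤ 1 := pow_le_one₀ hy.1 hy.2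
    nlinarith [sq_nonneg q]
  refine strictAntiOn_of_hasDerivWithinAt_neg (convex_Icc 0 1)
    (fun y hy => (hasDerivAt_h hq₀ (hqy y hy)).continuousAt.continuousWithinAt)
    (fun y hy => (hasDerivAt_h hq₀ (hqy y (interior_subset hy))).hasDerivWithinAt) ?_
  intro y hy
  rw [interior_Icc] at hy
  have hs : 0 < √(1 - q ^ 2 * y ^ 2) := sqrt_pos.2 (by linarith [hqy y (Ioo_subset_Icc_self hy)])
  have hnum : 0 < q ^ 2 * y ^ 4 := by have := hy.1; positivity
  exact div_neg_of_neg_of_pos (neg_neg_of_pos hnum) (pow_pos hs 3)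

theorem h_nonneg :
    ∀ q ∈ Set.Ioo (0 : ℝ) 1, ∀ y ∈ Set.Icc (0 : ℝ) 1,
      0 ≤ h q y ∧ (y < 1 → 0 < h q y) := by
  intro q hq y hy
  have hanti := strictAntiOn_h hq.1.ne' (by rw [abs_of_pos hq.1]; exact hq.2)
  have h1 : (1 : ℝ) ∈ Icc (0 : ℝ) 1 := right_mem_Icc.2 zero_le_one
  refine ⟨?_, fun hy1 => ?_⟩
  · simpa [h_one] using hanti.antitoneOn hy h1 hy.2
  · simpa [h_one] using hanti hy h1 hy1
end

section
/- Let q ∈ (0,1], c > 0, R > 0, and define r(τ) := (R/q²)·(f⁻¹(f(q) + √c·q³·τ))², where f(x) = x√(1-x²) + arccos(x) and f⁻¹ : [0,π/2] → [0,1] is its inverse. Let m = cR³/2 and E = -q²·m/R. Then r satisfies (1/2)ṙ(τ)² = m/r(τ) + E for all τ ∈ [0, τ_s), where τ_s = (π/2 - f(q))/(√c·q³), and r(0) = R, ṙ(0) = -√(2m/R + 2E). -/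
open Real Set

lemma f_cont : Continuous f := by
  unfold f
  exact ((continuous_id.mul (Real.continuous_sqrt.comp (by continuity))).add Real.continuous_arccos)

lemma f_zero : f 0 = π / 2 := by simp [f, Real.arccos_zero]

lemma f_one : f 1 = 0 := by norm_num [f, Real.arccos_one]

lemma f_nonneg {x : ℝ} (hx : x ∈ Icc (0:ℝ) 1) : 0 ≤ f x := by
  have := Real.arccos_nonneg x
  have : 0 ≤ x * Real.sqrt (1 - x ^ 2) := mul_nonneg hx.1 (Real.sqrt_nonneg _)
  unfold f; positivity

lemma f_lt_half_pi {x : ℝ} (hx : x ∈ Ioc (0:ℝ) 1) : f x < π / 2 := by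
  rcases eq_or_lt_of_le hx.2 with h1 | h1
  · subst h1; rw [f_one]; positivity
  · have hx0 := hx.1
    have hs1 : Real.sqrt (1 - x ^ 2) < 1 := by
      have h2 : Real.sqrt (1 - x ^ 2) < Real.sqrt 1 :=
        Real.sqrt_lt_sqrt (by nlinarith) (by nlinarith)
      simpa using h2
    have h2 : x * Real.sqrt (1 - x ^ 2) < x := by nlinarith [Real.sqrt_nonneg (1 - x^2)]
    have h3 : x ≤ Real.arcsin x := by
      nth_rewrite 1 [← Real.sin_arcsin (by linarith : (-1:ℝ) ≤ x) hx.2]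
      exact Real.sin_le (Real.arcsin_nonneg.2 hx0.le)
    unfold f
    rw [Real.arccos]
    linarith

lemma f_hasDerivAt {x : ℝ} (hx : x ∈ Ioo (0:ℝ) 1) :
    HasDerivAt f (-2 * x ^ 2 / Real.sqrt (1 - x ^ 2)) x := by
  have h1 : (0:ℝ) < 1 - x ^ 2 := by nlinarith [hx.1, hx.2]
  have hs : 0 < Real.sqrt (1 - x ^ 2) := Real.sqrt_pos.2 h1
  have hsq : Real.sqrt (1 - x ^ 2) ^ 2 = 1 - x ^ 2 := Real.sq_sqrt h1.le
  have d1 : HasDerivAt (fun y : ℝ => 1 - y ^ 2) (-2 * x) x := by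
    simpa using ((hasDerivAt_pow 2 x).const_sub 1)
  have d2 : HasDerivAt (fun y : ℝ => Real.sqrt (1 - y ^ 2))
      (1 / (2 * Real.sqrt (1 - x ^ 2)) * (-2 * x)) x :=
    (Real.hasDerivAt_sqrt (ne_of_gt h1)).comp x d1
  have d3 : HasDerivAt (fun y : ℝ => y * Real.sqrt (1 - y ^ 2))
      (1 * Real.sqrt (1 - x ^ 2) + x * (1 / (2 * Real.sqrt (1 - x ^ 2)) * (-2 * x))) x :=
    (hasDerivAt_id x).mul d2
  have d4 : HasDerivAt Real.arccos (-(1 / Real.sqrt (1 - x ^ 2))) x :=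
    Real.hasDerivAt_arccos (by linarith [hx.1]) (ne_of_lt hx.2)
  have := d3.add d4
  refine this.congr_deriv (Eq.symm ?_)
  field_simp
  nlinarith [hsq]

lemma f_strictAnti : StrictAntiOn f (Icc (0:ℝ) 1) := by
  apply strictAntiOn_of_deriv_neg (convex_Icc 0 1) (f_cont.continuousOn)
  intro x hx
  rw [interior_Icc] at hx
  rw [(f_hasDerivAt hx).deriv]
  have h1 : (0:ℝ) < 1 - x ^ 2 := by nlinarith [hx.1, hx.2]
  have hs : 0 < Real.sqrt (1 - x ^ 2) := Real.sqrt_pos.2 h1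
  apply div_neg_of_neg_of_pos (by nlinarith [hx.1]) hs

lemma f_pos {x : ℝ} (h0 : 0 ≤ x) (h1 : x < 1) : 0 < f x := by
  unfold f
  have := Real.arccos_pos.2 h1
  have : 0 ≤ x * Real.sqrt (1 - x ^ 2) := mul_nonneg h0 (Real.sqrt_nonneg _)
  positivity

lemma f_mem {x : ℝ} (hx : x ∈ Ioo (0:ℝ) 1) : f x ∈ Ioo 0 (π/2) :=
  ⟨f_pos hx.1.le hx.2, f_lt_half_pi ⟨hx.1, hx.2.le⟩⟩

lemma finv_mem_Ioo (finv : ℝ → ℝ)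
    (hmem : ∀ s ∈ Icc 0 (π/2), finv s ∈ Icc (0:ℝ) 1)
    (hright : ∀ s ∈ Icc 0 (π/2), f (finv s) = s)
    {t : ℝ} (ht : t ∈ Ioo 0 (π/2)) : finv t ∈ Ioo (0:ℝ) 1 := by
  have htI : t ∈ Icc 0 (π/2) := ⟨ht.1.le, ht.2.le⟩
  have h1 := hmem t htI
  have h2 := hright t htI
  constructor
  · rcases eq_or_lt_of_le h1.1 with h | h
    · exfalso; rw [← h, f_zero] at h2; linarith [ht.2]
    · exact h
  · rcases eq_or_lt_of_le h1.2 with h | h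
    · exfalso; rw [h, f_one] at h2; linarith [ht.1]
    · exact h

lemma finv_hasDerivAt (finv : ℝ → ℝ)
    (hmem : ∀ s ∈ Icc 0 (π/2), finv s ∈ Icc (0:ℝ) 1)
    (hleft : ∀ x ∈ Icc (0:ℝ) 1, finv (f x) = x)
    (hright : ∀ s ∈ Icc 0 (π/2), f (finv s) = s)
    {s : ℝ} (hs : s ∈ Ioo 0 (π/2)) :
    HasDerivAt finv (-Real.sqrt (1 - (finv s) ^ 2) / (2 * (finv s) ^ 2)) s := by
  have key : ∀ t ∈ Ioo 0 (π/2), finv t ∈ Ioo (0:ℝ) 1 :=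
    fun t ht => finv_mem_Ioo finv hmem hright ht
  have hanti : StrictMonoOn (fun t => -finv t) (Ioo 0 (π/2)) := by
    intro t1 h1 t2 h2 hlt
    have hu1 := key t1 h1
    have hu2 := key t2 h2
    have hf1 := hright t1 ⟨h1.1.le, h1.2.le⟩
    have hf2 := hright t2 ⟨h2.1.le, h2.2.le⟩
    simp only [neg_lt_neg_iff]
    rcases lt_trichotomy (finv t2) (finv t1) with h | h | h
    · exact h
    · exfalso; rw [← hf1, ← hf2, h] at hlt; exact lt_irrefl _ hlt
    · exfalso
      have := f_strictAnti ⟨hu1.1.le, hu1.2.le⟩ ⟨hu2.1.le, hu2.2.le⟩ h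
      rw [hf1, hf2] at this; linarith
  have hu := key s hs
  have hcontn : ContinuousAt (fun t => -finv t) s := by
    apply hanti.continuousAt_of_image_mem_nhds (isOpen_Ioo.mem_nhds hs)
    apply Filter.mem_of_superset (isOpen_Ioo.mem_nhds
      (show -finv s ∈ Ioo (-1:ℝ) 0 by constructor <;> [linarith [hu.2]; linarith [hu.1]]))
    intro y hy
    have hny : -y ∈ Ioo (0:ℝ) 1 := ⟨by linarith [hy.2], by linarith [hy.1]⟩
    refine ⟨f (-y), f_mem hny, ?_⟩
    show -finv (f (-y)) = y
    rw [hleft (-y) ⟨hny.1.le, hny.2.le⟩]; ring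
  have hcont : ContinuousAt finv s := by
    have := hcontn.neg
    simpa only [Pi.neg_def, neg_neg] using this
  have hfd : HasDerivAt f (-2 * (finv s) ^ 2 / Real.sqrt (1 - (finv s) ^ 2)) (finv s) :=
    f_hasDerivAt hu
  have hy : (0:ℝ) < 1 - (finv s) ^ 2 := by nlinarith [hu.1, hu.2]
  have hsq : Real.sqrt (1 - (finv s) ^ 2) > 0 := Real.sqrt_pos.2 hy
  have hne : -2 * (finv s) ^ 2 / Real.sqrt (1 - (finv s) ^ 2) ≠ 0 := by
    apply div_ne_zero _ (ne_of_gt hsq)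
    nlinarith [hu.1]
  have hev : ∀ᶠ y in nhds s, f (finv y) = y := by
    filter_upwards [isOpen_Ioo.mem_nhds hs] with y hy2
    exact hright y ⟨hy2.1.le, hy2.2.le⟩
  have hmain := HasDerivAt.of_local_left_inverse hcont hfd hne hev
  refine hmain.congr_deriv (Eq.symm ?_)
  rw [eq_comm]
  field_simp

theorem TB_solution_solves_energy_equation
    (q c R : ℝ) (hq : q ∈ Set.Ioc (0 : ℝ) 1) (hc : 0 < c) (hR : 0 < R)
    (finv : ℝ → ℝ)
    (hfinv_mem : ∀ s ∈ Set.Icc 0 (Real.pi / 2), finv s ∈ Set.Icc (0 : ℝ) 1)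
    (hfinv_left : ∀ x ∈ Set.Icc (0 : ℝ) 1, finv (f x) = x)
    (hfinv_right : ∀ s ∈ Set.Icc 0 (Real.pi / 2), f (finv s) = s)
    (m E τs : ℝ) (hm : m = c * R ^ 3 / 2) (hE : E = -q ^ 2 * m / R)
    (hτs : τs = (Real.pi / 2 - f q) / (Real.sqrt c * q ^ 3))
    (r : ℝ → ℝ)
    (hr : ∀ τ, r τ = (R / q ^ 2) * (finv (f q + Real.sqrt c * q ^ 3 * τ)) ^ 2) :
    r 0 = R ∧
    (∀ τ ∈ Set.Ico 0 τs,
      DifferentiableWithinAt ℝ r (Set.Ico 0 τs) τ ∧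
      (1 / 2) * (derivWithin r (Set.Ico 0 τs) τ) ^ 2 = m / r τ + E) ∧
    derivWithin r (Set.Ico 0 τs) 0 = -Real.sqrt (2 * m / R + 2 * E) := by
  obtain ⟨hq0, hq1⟩ := hq
  set k := Real.sqrt c * q ^ 3 with hkdef
  have hsc : 0 < Real.sqrt c := Real.sqrt_pos.2 hc
  have hk : 0 < k := by positivity
  have hfq0 : 0 ≤ f q := f_nonneg ⟨hq0.le, hq1⟩
  have hfqlt : f q < π / 2 := f_lt_half_pi ⟨hq0, hq1⟩
  have hτpos : 0 < τs := by rw [hτs]; exact div_pos (by linarith) hk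
  have hkτs : k * τs = π / 2 - f q := by
    rw [hτs]; field_simp
  have hslt : ∀ τ ∈ Ico 0 τs, f q + k * τ < π / 2 := by
    intro τ hτ
    have : k * τ < k * τs := (mul_lt_mul_iff_right₀ hk).2 hτ.2
    linarith [hkτs]
  have hsnn : ∀ τ ∈ Ico 0 τs, 0 ≤ f q + k * τ := by
    intro τ hτ
    have : 0 ≤ k * τ := mul_nonneg hk.le hτ.1
    linarith
  have hr0 : r 0 = R := by
    rw [hr 0, mul_zero, add_zero, hfinv_left q ⟨hq0.le, hq1⟩]
    field_simp
  -- derivative at points where s > 0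
  have hDer : ∀ τ ∈ Ico 0 τs, 0 < f q + k * τ →
      HasDerivAt r (-(R * Real.sqrt c * q * Real.sqrt (1 - (finv (f q + k * τ)) ^ 2)
        / (finv (f q + k * τ)))) τ := by
    intro τ hτ hspos
    have hsIoo : f q + k * τ ∈ Ioo 0 (π / 2) := ⟨hspos, hslt τ hτ⟩
    have hu := finv_mem_Ioo finv hfinv_mem hfinv_right hsIoo
    have hfd := finv_hasDerivAt finv hfinv_mem hfinv_left hfinv_right hsIoo
    have hlin : HasDerivAt (fun t : ℝ => f q + k * t) k τ := by
      simpa using ((hasDerivAt_id τ).const_mul k).const_add (f q)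
    have hcomp : HasDerivAt (fun t : ℝ => finv (f q + k * t))
        (-Real.sqrt (1 - (finv (f q + k * τ)) ^ 2) / (2 * (finv (f q + k * τ)) ^ 2) * k) τ :=
      HasDerivAt.comp τ hfd hlin
    have hpow := (hcomp.pow 2).const_mul (R / q ^ 2)
    have hrf : r = fun t => (R / q ^ 2) * (fun t : ℝ => finv (f q + k * t)) t ^ 2 := by
      funext t; rw [hr t]
    rw [hrf]
    refine hpow.congr_deriv (Eq.symm ?_)
    have hu0 : finv (f q + k * τ) ≠ 0 := ne_of_gt hu.1
    have hq0' : q ≠ 0 := ne_of_gt hq0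
    field_simp
    ring
  have hDW : ∀ τ ∈ Ico 0 τs, 0 < f q + k * τ →
      DifferentiableWithinAt ℝ r (Ico 0 τs) τ ∧
      derivWithin r (Ico 0 τs) τ = -(R * Real.sqrt c * q *
        Real.sqrt (1 - (finv (f q + k * τ)) ^ 2) / (finv (f q + k * τ))) := by
    intro τ hτ hspos
    have h := hDer τ hτ hspos
    exact ⟨h.differentiableAt.differentiableWithinAt,
      h.hasDerivWithinAt.derivWithin (uniqueDiffOn_Ico 0 τs τ hτ)⟩
  have hEn : ∀ τ ∈ Ico 0 τs, 0 < f q + k * τ →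
      (1 / 2) * (derivWithin r (Ico 0 τs) τ) ^ 2 = m / r τ + E := by
    intro τ hτ hspos
    have hsIoo : f q + k * τ ∈ Ioo 0 (π / 2) := ⟨hspos, hslt τ hτ⟩
    have hu := finv_mem_Ioo finv hfinv_mem hfinv_right hsIoo
    rw [(hDW τ hτ hspos).2, hr τ, hm, hE, hm]
    set u := finv (f q + k * τ) with hudef
    have h1 : Real.sqrt (1 - u ^ 2) ^ 2 = 1 - u ^ 2 :=
      Real.sq_sqrt (by nlinarith [hu.1, hu.2])
    have h2 : Real.sqrt c ^ 2 = c := Real.sq_sqrt hc.le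
    have hu0 : u ≠ 0 := ne_of_gt hu.1
    have hq0' : q ≠ 0 := ne_of_gt hq0
    have hR0 : R ≠ 0 := ne_of_gt hR
    field_simp
    linear_combination (Real.sqrt c^2) * h1 + (1-u^2) * h2
  -- the degenerate case q = 1 at τ = 0
  have hq1case : q = 1 → HasDerivWithinAt r 0 (Ico 0 τs) 0 := by
    intro hq1'
    subst hq1'
    have hf1 : f 1 = 0 := f_one
    have hk2 : k ^ 2 = c := by
      rw [hkdef, mul_pow, Real.sq_sqrt hc.le]; norm_num
    rw [hasDerivWithinAt_iff_tendsto_slope]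
    apply squeeze_zero_norm' (a := fun τ : ℝ => R * c * τ)
    · filter_upwards [self_mem_nhdsWithin] with τ hτ'
      obtain ⟨hτI, hτne⟩ := hτ'
      have hτpos' : 0 < τ := lt_of_le_of_ne hτI.1 (Ne.symm hτne)
      have hsI : f 1 + k * τ ∈ Icc 0 (π / 2) := ⟨hsnn τ hτI, (hslt τ hτI).le⟩
      have hu := hfinv_mem _ hsI
      have hfu := hfinv_right _ hsI
      set u := finv (f 1 + k * τ) with hudef
      have harc : Real.arccos u ≤ f 1 + k * τ := by
        have h1 : 0 ≤ u * Real.sqrt (1 - u ^ 2) :=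
          mul_nonneg hu.1 (Real.sqrt_nonneg _)
        have h2 : u * Real.sqrt (1 - u ^ 2) + Real.arccos u = f 1 + k * τ := hfu
        linarith
      have hcos : Real.cos (f 1 + k * τ) ≤ u := by
        have h3 : Real.cos (f 1 + k * τ) ≤ Real.cos (Real.arccos u) :=
          Real.cos_le_cos_of_nonneg_of_le_pi (Real.arccos_nonneg u)
            (by linarith [hslt τ hτI, Real.pi_pos]) harc
        rwa [Real.cos_arccos (by linarith [hu.1]) hu.2] at h3
      have hquad : 1 - ((f 1 + k * τ)) ^ 2 / 2 ≤ u :=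
        le_trans Real.one_sub_sq_div_two_le_cos hcos
      have hs_eq : f 1 + k * τ = k * τ := by rw [hf1, zero_add]
      have hub : 1 - u ^ 2 ≤ (k * τ) ^ 2 := by
        rw [hs_eq] at hquad
        nlinarith [hu.1, hu.2]
      rw [Real.norm_eq_abs, slope_def_field, hr0, sub_zero, hr τ]
      rw [abs_div, abs_of_pos hτpos']
      rw [div_le_iff₀ hτpos']
      have habs : |R / (1:ℝ) ^ 2 * u ^ 2 - R| = R * (1 - u ^ 2) := by
        have he : R / (1:ℝ) ^ 2 * u ^ 2 - R = R * (u ^ 2 - 1) := by norm_num; ring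
        rw [he, abs_of_nonpos (mul_nonpos_of_nonneg_of_nonpos hR.le (by nlinarith [hu.2, hu.1]))]
        ring
      rw [show f 1 + Real.sqrt c * 1 ^ 3 * τ = f 1 + k * τ by rw [hkdef], ← hudef, habs]
      have h5 : R * (1 - u ^ 2) ≤ R * ((k * τ) ^ 2) := mul_le_mul_of_nonneg_left hub hR.le
      have h6 : R * ((k * τ) ^ 2) = R * c * τ * τ := by rw [mul_pow, hk2]; ring
      linarith
    · have : Filter.Tendsto (fun τ : ℝ => R * c * τ) (nhdsWithin 0 (Ico 0 τs \ {0}))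
          (nhds (R * c * 0)) :=
        ((continuous_const.mul continuous_id).tendsto 0).mono_left nhdsWithin_le_nhds
      simpa using this
  have h0mem : (0:ℝ) ∈ Ico 0 τs := ⟨le_refl 0, hτpos⟩
  have hfinvq : finv (f q + k * 0) = q := by
    rw [mul_zero, add_zero, hfinv_left q ⟨hq0.le, hq1⟩]
  refine ⟨hr0, ?_, ?_⟩
  · intro τ hτ
    rcases lt_or_eq_of_le (hsnn τ hτ) with hspos | hszero
    · exact ⟨(hDW τ hτ hspos).1, hEn τ hτ hspos⟩
    · -- f q + k * τ = 0, so f q = 0, k τ = 0, hence q = 1, τ = 0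
      have hkτ : 0 ≤ k * τ := mul_nonneg hk.le hτ.1
      have hfq : f q = 0 := by linarith [hkτ, hszero.le, hszero.ge]
      have hτ0 : τ = 0 := by
        have hkτ0 : k * τ = 0 := by linarith [hszero.le, hszero.ge]
        rcases mul_eq_zero.1 hkτ0 with h | h
        · exact absurd h (ne_of_gt hk)
        · exact h
      have hq1' : q = 1 := by
        by_contra h
        exact absurd hfq (ne_of_gt (f_pos hq0.le (lt_of_le_of_ne hq1 h)))
      subst hτ0
      have hDW0 := hq1case hq1'
      have hd0 : derivWithin r (Ico 0 τs) 0 = 0 :=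
        hDW0.derivWithin (uniqueDiffOn_Ico 0 τs 0 h0mem)
      refine ⟨hDW0.differentiableWithinAt, ?_⟩
      rw [hd0, hr0, hm, hE, hm, hq1']
      field_simp
      norm_num
  · have hA : 2 * m / R + 2 * E = c * R ^ 2 * (1 - q ^ 2) := by
      rw [hm, hE, hm]; field_simp; ring
    have hsqrtA : Real.sqrt (c * R ^ 2 * (1 - q ^ 2)) =
        Real.sqrt c * R * Real.sqrt (1 - q ^ 2) := by
      rw [Real.sqrt_mul (by positivity : (0:ℝ) ≤ c * R ^ 2), Real.sqrt_mul hc.le,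
        Real.sqrt_sq hR.le]
    rcases eq_or_lt_of_le hq1 with hq1' | hqlt
    · have hDW0 := hq1case hq1'
      have hd0 : derivWithin r (Ico 0 τs) 0 = 0 :=
        hDW0.derivWithin (uniqueDiffOn_Ico 0 τs 0 h0mem)
      rw [hd0, hA, hq1']
      simp
    · have hspos : 0 < f q + k * 0 := by
        rw [mul_zero, add_zero]; exact f_pos hq0.le hqlt
      rw [(hDW 0 h0mem hspos).2, hfinvq, hA, hsqrtA]
      have hq0' : q ≠ 0 := ne_of_gt hq0
      field_simp
end

section
/- Let V₀(y,R) := c(R)/y⁶ - (R c'(R) + 3c(R))/(2 y⁴ r'(y,R)) + μ² and w(y,R) := (2 y² r'(y,R))/(√(c(R))·√(1-q(R)²y²)·√(1-R²q(R)²c(R))). Suppose on D(ε): (i) r'(y,R) = y²A(y,R) with 1 ≤ A ≤ K for a constant K; (ii) c, c' are continuous with 0 < c_min ≤ c ≤ c_max and |c'| ≤ c'_max on [0,R(ε)]; (iii) √(1-q²y²) ≥ δ₁ > 0 and √(1-R²q²c) ≥ δ₂ > 0 on D(ε). Then there exists k > 0 such that |V₀(y,R)|·w(y,R) ≤ k/y²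 for all (y,R) ∈ D(ε). -/
/-!
Both factors are controlled separately on `D(ε)`: since `r' = y² A` with `A ≥ 1` and `y ≤ 1`, every
term of `V₀` is at most a constant times `y⁻⁶`, while the weight `w` is at most a constant times
`y⁴`, because its denominator is bounded below by `√c_min δ₁ δ₂ > 0`. The product is then `O(y⁻²)`.
-/

lemma abs_mul_add_three_mul_le {R Rε c c' cmax c'max : ℝ} (hR : 0 ≤ R) (hRle : R ≤ Rε)
    (hc : 0 ≤ c) (hcle : c ≤ cmax) (hc' : |c'| ≤ c'max) :
    |R * c' + 3 * c| ≤ Rε * c'max + 3 * cmax :=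
  calc |R * c' + 3 * c| ≤ |R| * |c'| + |3 * c| := by rw [← abs_mul]; exact abs_add_le _ _
    _ = R * |c'| + 3 * c := by rw [abs_of_nonneg hR, abs_of_nonneg (by positivity : (0 : ℝ) ≤ 3 * c)]
    _ ≤ Rε * c'max + 3 * cmax := by
      gcongr
      exact hR.trans hRle

lemma abs_V0_le_div_pow_six {y a R Rε c c' cmax c'max : ℝ} (μ : ℝ) (hy : 0 < y) (hy1 : y ≤ 1)
    (ha : 1 ≤ a) (hR : 0 ≤ R) (hRle : R ≤ Rε) (hc : 0 ≤ c) (hcle : c ≤ cmax)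
    (hc' : |c'| ≤ c'max) :
    |c / y ^ 6 - (R * c' + 3 * c) / (2 * y ^ 4 * (y ^ 2 * a)) + μ ^ 2|
      ≤ (cmax + (Rε * c'max + 3 * cmax) / 2 + μ ^ 2) / y ^ 6 := by
  have hy6 : 0 < y ^ 6 := by positivity
  have hterm₁ : |c / y ^ 6| ≤ cmax / y ^ 6 := by
    rw [abs_of_nonneg (by positivity)]
    gcongr
  have hterm₂ : |(R * c' + 3 * c) / (2 * y ^ 4 * (y ^ 2 * a))|
      ≤ (Rε * c'max + 3 * cmax) / 2 / y ^ 6 := by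
    have hnum := abs_mul_add_three_mul_le hR hRle hc hcle hc'
    rw [abs_div, abs_of_pos (a := 2 * y ^ 4 * (y ^ 2 * a)) (by positivity), div_div,
      show 2 * y ^ 4 * (y ^ 2 * a) = 2 * y ^ 6 * a by ring]
    exact div_le_div₀ ((abs_nonneg _).trans hnum) hnum (by positivity)
      (le_mul_of_one_le_right (by positivity) ha)
  have hterm₃ : |μ ^ 2| ≤ μ ^ 2 / y ^ 6 := by
    rw [abs_of_nonneg (sq_nonneg μ), le_div_iff₀ hy6]
    exact mul_le_of_le_one_right (sq_nonneg μ) (pow_le_one₀ hy.le hy1)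
  calc _ ≤ |c / y ^ 6| + |-((R * c' + 3 * c) / (2 * y ^ 4 * (y ^ 2 * a)))| + |μ ^ 2| := by
        rw [sub_eq_add_neg]; exact abs_add_three _ _ _
    _ ≤ cmax / y ^ 6 + (Rε * c'max + 3 * cmax) / 2 / y ^ 6 + μ ^ 2 / y ^ 6 := by
      rw [abs_neg]; gcongr
    _ = _ := by ring

lemma weight_le_mul_pow_four_div {y a K c cmin s₁ s₂ δ₁ δ₂ : ℝ} (ha : 0 ≤ a) (haK : a ≤ K) (hcmin : 0 < cmin)
    (hc : cmin ≤ c) (hδ₁ : 0 < δ₁) (hδ₂ : 0 < δ₂) (hs₁ : δ₁ ≤ s₁) (hs₂ : δ₂ ≤ s₂) :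
    2 * y ^ 2 * (y ^ 2 * a) / (Real.sqrt c * s₁ * s₂)
      ≤ 2 * K * y ^ 4 / (Real.sqrt cmin * δ₁ * δ₂) := by
  rw [show 2 * y ^ 2 * (y ^ 2 * a) = 2 * a * y ^ 4 by ring]
  have hden : Real.sqrt cmin * δ₁ * δ₂ ≤ Real.sqrt c * s₁ * s₂ :=
    mul_le_mul (mul_le_mul (Real.sqrt_le_sqrt hc) hs₁ hδ₁.le (Real.sqrt_nonneg c)) hs₂ hδ₂.le
      (mul_nonneg (Real.sqrt_nonneg c) (hδ₁.le.trans hs₁))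
  exact div_le_div₀ (by have := ha.trans haK; positivity) (by gcongr) (by positivity) hden

theorem V0_weighted_bound_general
    (Rε μ K cmin cmax c'max δ₁ δ₂ : ℝ)
    (hcmin : 0 < cmin)
    (hδ₁ : 0 < δ₁) (hδ₂ : 0 < δ₂)
    (S : Set (ℝ × ℝ))
    (hS : S ⊆ {p : ℝ × ℝ | 0 < p.1 ∧ p.1 ≤ 1 ∧ 0 ≤ p.2 ∧ p.2 ≤ Rε})
    (c c' q : ℝ → ℝ) (A : ℝ × ℝ → ℝ)
    (hcbd : ∀ R ∈ Set.Icc (0 : ℝ) Rε, cmin ≤ c R ∧ c R ≤ cmax ∧ |c' R| ≤ c'max)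
    (hA : ∀ p ∈ S, 1 ≤ A p ∧ A p ≤ K)
    (hδ₁' : ∀ p ∈ S, δ₁ ≤ Real.sqrt (1 - q p.2 ^ 2 * p.1 ^ 2))
    (hδ₂' : ∀ p ∈ S, δ₂ ≤ Real.sqrt (1 - p.2 ^ 2 * q p.2 ^ 2 * c p.2)) :
    ∃ k > (0 : ℝ), ∀ p ∈ S,
      |c p.2 / p.1 ^ 6
        - (p.2 * c' p.2 + 3 * c p.2) / (2 * p.1 ^ 4 * (p.1 ^ 2 * A p)) + μ ^ 2|
      * ((2 * p.1 ^ 2 * (p.1 ^ 2 * A p)) /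
          (Real.sqrt (c p.2) * Real.sqrt (1 - q p.2 ^ 2 * p.1 ^ 2)
            * Real.sqrt (1 - p.2 ^ 2 * q p.2 ^ 2 * c p.2)))
      ≤ k / p.1 ^ 2 := by
  set M := cmax + (Rε * c'max + 3 * cmax) / 2 + μ ^ 2
  set D := Real.sqrt cmin * δ₁ * δ₂
  refine ⟨max 1 (M * (2 * K) / D), by positivity, fun p hp => ?_⟩
  obtain ⟨hy, hy1, hR, hRle⟩ := hS hp
  obtain ⟨hcmin_le, hcmax_le, hc'⟩ := hcbd p.2 ⟨hR, hRle⟩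
  obtain ⟨hA1, hAK⟩ := hA p hp
  have hV := abs_V0_le_div_pow_six μ hy hy1 hA1 hR hRle (hcmin.le.trans hcmin_le) hcmax_le hc'
  have hw := weight_le_mul_pow_four_div (y := p.1) (zero_le_one.trans hA1) hAK hcmin hcmin_le hδ₁ hδ₂
    (hδ₁' p hp) (hδ₂' p hp)
  calc _ ≤ M / p.1 ^ 6 * (2 * K * p.1 ^ 4 / D) :=
        mul_le_mul hV hw (by positivity) ((abs_nonneg _).trans hV)
    _ = M * (2 * K) / D / p.1 ^ 2 := by field_simp
    _ ≤ _ := by gcongr; exact le_max_right _ _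

theorem V0_weighted_bound
    (Rε μ K cmin cmax c'max δ₁ δ₂ : ℝ)
    (hRε : 0 < Rε) (hK : 1 ≤ K) (hcmin : 0 < cmin) (hcc : cmin ≤ cmax)
    (hc'max : 0 ≤ c'max) (hδ₁ : 0 < δ₁) (hδ₂ : 0 < δ₂)
    (S : Set (ℝ × ℝ))
    (hS : S ⊆ {p : ℝ × ℝ | 0 < p.1 ∧ p.1 ≤ 1 ∧ 0 ≤ p.2 ∧ p.2 ≤ Rε})
    (c c' q : ℝ → ℝ) (A : ℝ × ℝ → ℝ)
    (hccont : ContinuousOn c (Set.Icc 0 Rε)) (hc'cont : ContinuousOn c' (Set.Icc 0 Rε))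
    (hcbd : ∀ R ∈ Set.Icc (0 : ℝ) Rε, cmin ≤ c R ∧ c R ≤ cmax ∧ |c' R| ≤ c'max)
    (hA : ∀ p ∈ S, 1 ≤ A p ∧ A p ≤ K)
    (hδ₁' : ∀ p ∈ S, δ₁ ≤ Real.sqrt (1 - q p.2 ^ 2 * p.1 ^ 2))
    (hδ₂' : ∀ p ∈ S, δ₂ ≤ Real.sqrt (1 - p.2 ^ 2 * q p.2 ^ 2 * c p.2)) :
    ∃ k > (0 : ℝ), ∀ p ∈ S,
      |c p.2 / p.1 ^ 6
        - (p.2 * c' p.2 + 3 * c p.2) / (2 * p.1 ^ 4 * (p.1 ^ 2 * A p)) + μ ^ 2|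
      * ((2 * p.1 ^ 2 * (p.1 ^ 2 * A p)) /
          (Real.sqrt (c p.2) * Real.sqrt (1 - q p.2 ^ 2 * p.1 ^ 2)
            * Real.sqrt (1 - p.2 ^ 2 * q p.2 ^ 2 * c p.2)))
      ≤ k / p.1 ^ 2 :=
  V0_weighted_bound_general Rε μ K cmin cmax c'max δ₁ δ₂ hcmin hδ₁ hδ₂ S hS c c' q A hcbd hA hδ₁'
    hδ₂'
end
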